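/- Let g ≥ 2 be even. Then the ideal J_g^- of ℂ[α,γ] is generated by the set {ζ_g^-, γ ζ_{g−2}^-, γ² ζ_{g−4}^-, …, γ^{g/2−1} ζ_2^-, γ^{g/2}}, and the residue classes of the monomials α^j γ^i with 0 ≤ i ≤ g/2 − 1 and 0 ≤ j ≤ g − 2i − 1 form a ℂ-vector space basis of the quotient ring ℂ[α,γ]/J_g^-. -/

import Mathlib

open MvPolynomial

/-- ζ_k^- ∈ ℂ[α,γ] (variables: X 0 = α, X 1 = γ):
    ζ_{k+1}^- = α ζ_k^- + 2k(k−1) γ ζ_{k−2}^- for k even, and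
    ζ_{k+1}^- = α ζ_k^- − 16k² ζ_{k−1}^- + 2k(k−1) γ ζ_{k−2}^- for k odd. -/
noncomputable def zm : ℕ → MvPolynomial (Fin 2) ℂ
  | 0 => 1
  | 1 => X 0
  | 2 => X 0 * zm 1 - C 16 * zm 0
  | (n + 3) =>
      if n % 2 = 0 then
        X 0 * zm (n + 2) + C (2 * ((n : ℂ) + 2) * ((n : ℂ) + 1)) * X 1 * zm n
      else
        X 0 * zm (n + 2) - C (16 * ((n : ℂ) + 2) ^ 2) * zm (n + 1)
          + C (2 * ((n : ℂ) + 2) * ((n : ℂ) + 1)) * X 1 * zm n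

/-- ζ_k^- for an integer index k, with ζ_k^- = 0 for k < 0. -/
noncomputable def zmZ (k : ℤ) : MvPolynomial (Fin 2) ℂ :=
  if k < 0 then 0 else zm k.toNat

/-- J_g^- = (ζ_g^-, ζ_{g+1}^-, ζ_{g+2}^-) ⊆ ℂ[α,γ]. -/
noncomputable def Jm (g : ℕ) : Ideal (MvPolynomial (Fin 2) ℂ) :=
  Ideal.span {zm g, zm (g + 1), zm (g + 2)}

/-! The ideal `J_{2M}` equals the staircase ideal `I_M = (γ^i ζ_{2(M-i)} : i ≤ M)`. In the
recurrence for `ζ_{n+3}` the coefficient of `γ ζ_n` is a nonzero constant and the term in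
`ζ_{n+1}` is absent for even `n`; with this parity bookkeeping, `γ^i ζ_n` lies in either ideal as soon as
`n + 2i ≥ 2M`, which gives both inclusions.

Since `ζ_k = α^k + (terms of lower α-degree)`, division by the generators reduces every monomial
modulo `I_M` to a combination of the staircase monomials `α^j γ^i` with `i < M`, `j < 2(M-i)`.
They are independent modulo `I_M` by induction on `M`, using `I_{M+1} = (ζ_{2M+2}) + γ I_M`: after
setting `γ = 0` an element of `I_{M+1}` becomes a multiple of the degree-`2M+2` polynomial
`ζ_{2M+2}(α, 0)`, so a standard combination in `I_{M+1}` is divisible by `γ`, and since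
`ζ_{2M+2} ∈ I_M` the quotient by `γ` is a standard combination in `I_M`. -/

theorem Ideal.exists_basis_quotient_of_isCompl {K A ι : Type*} [CommRing K] [CommRing A]
    [Algebra K A] {I : Ideal A} {v : ι → A} (hv : LinearIndependent K v)
    (hcompl : IsCompl (Submodule.span K (Set.range v)) (I.restrictScalars K)) :
    ∃ b : Module.Basis ι K (A ⧸ I), ∀ i, b i = Ideal.Quotient.mk I (v i) :=
  ⟨(Module.Basis.span hv).map ((Submodule.quotientEquivOfIsCompl _ _ hcompl.symm).symm.trans
    (Submodule.Quotient.restrictScalarsEquiv K I)), fun i => by simp [Module.Basis.span_apply]⟩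

namespace MvPolynomial

section Specialization

variable {R : Type*} [CommRing R]

noncomputable def evalGammaZero : MvPolynomial (Fin 2) R →ₐ[R] Polynomial R :=
  aeval ![Polynomial.X, 0]

noncomputable def embedAlpha : Polynomial R →ₐ[R] MvPolynomial (Fin 2) R :=
  Polynomial.aeval (X 0)

@[simp] lemma evalGammaZero_X_zero :
    evalGammaZero (X 0 : MvPolynomial (Fin 2) R) = Polynomial.X := by
  simp [evalGammaZero]

@[simp] lemma evalGammaZero_X_one : evalGammaZero (X 1 : MvPolynomial (Fin 2) R) = 0 := by
  simp [evalGammaZero]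

lemma evalGammaZero_embedAlpha (u : Polynomial R) : evalGammaZero (embedAlpha u) = u := by
  have : evalGammaZero.comp embedAlpha = AlgHom.id R (Polynomial R) :=
    Polynomial.algHom_ext (by simp [embedAlpha])
  exact AlgHom.congr_fun this u

lemma X_one_dvd_of_evalGammaZero_eq_zero {q : MvPolynomial (Fin 2) R}
    (hq : evalGammaZero q = 0) : X 1 ∣ q := by
  let mk := Ideal.Quotient.mkₐ R (Ideal.span {(X 1 : MvPolynomial (Fin 2) R)})
  have hmk : mk.comp (embedAlpha.comp evalGammaZero) = mk := by
    refine algHom_ext fun i => ?_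
    fin_cases i
    · simp [embedAlpha]
    · simp [mk]
  have := AlgHom.congr_fun hmk q
  rw [AlgHom.comp_apply, AlgHom.comp_apply, hq, map_zero, map_zero] at this
  rw [← Ideal.mem_span_singleton, ← Ideal.Quotient.eq_zero_iff_mem]
  exact this.symm

lemma mem_of_degreeOf_lt {T : Submodule R (MvPolynomial (Fin 2) R)} {n : ℕ}
    (hT : ∀ j < n, ∀ i, X 0 ^ j * X 1 ^ i ∈ T) {f : MvPolynomial (Fin 2) R}
    (hf : degreeOf 0 f < n) : f ∈ T := by
  rw [f.as_sum]
  refine Submodule.sum_mem _ fun m hm => ?_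
  rw [monomial_eq, Finsupp.prod_fintype _ _ (fun _ => pow_zero _), Fin.prod_univ_two,
    ← smul_eq_C_mul]
  exact T.smul_mem _ (hT _ ((monomial_le_degreeOf 0 hm).trans_lt hf) _)

lemma degree_evalGammaZero_lt {f : MvPolynomial (Fin 2) R} {n : ℕ} (hf : degreeOf 0 f < n) :
    (evalGammaZero f).degree < n := by
  refine Polynomial.mem_degreeLT.mp
    (mem_of_degreeOf_lt (T := (Polynomial.degreeLT R n).comap evalGammaZero.toLinearMap) ?_ hf)
  intro j hj i
  rcases i with _ | i
  · simpa [Polynomial.mem_degreeLT] using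
      (Polynomial.degree_X_pow_le j).trans_lt (by exact_mod_cast hj)
  · simp

lemma degree_evalGammaZero_eq [Nontrivial R] {f : MvPolynomial (Fin 2) R} {n : ℕ}
    (hf : degreeOf 0 (f - X 0 ^ n) < n) : (evalGammaZero f).degree = n := by
  have hlow := degree_evalGammaZero_lt hf
  rw [map_sub, map_pow, evalGammaZero_X_zero] at hlow
  rw [← sub_add_cancel (evalGammaZero f) (Polynomial.X ^ n),
    Polynomial.degree_add_eq_right_of_degree_lt (by rwa [Polynomial.degree_X_pow]),
    Polynomial.degree_X_pow]

end Specialization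

section Staircase

open scoped Pointwise

variable {R : Type*} [CommRing R] (p : ℕ → MvPolynomial (Fin 2) R) (d : ℕ → ℕ)

def staircase (M : ℕ) : Set (ℕ × ℕ) := {ij | ij.1 < M ∧ ij.2 < d (M - ij.1)}

noncomputable def stairMonomial (ij : ℕ × ℕ) : MvPolynomial (Fin 2) R :=
  X 0 ^ ij.2 * X 1 ^ ij.1

noncomputable def staircaseIdeal (M : ℕ) : Ideal (MvPolynomial (Fin 2) R) :=
  Ideal.span {f | ∃ i ≤ M, f = X 1 ^ i * p (M - i)}

variable (R) in
noncomputable def staircaseSpan (M : ℕ) : Submodule R (MvPolynomial (Fin 2) R) :=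
  Submodule.span R (stairMonomial '' staircase d M)

variable {p d}

lemma X_one_pow_mul_mem_staircaseIdeal {M i : ℕ} (hi : i ≤ M) :
    X 1 ^ i * p (M - i) ∈ staircaseIdeal p M :=
  Ideal.subset_span ⟨i, hi, rfl⟩

lemma mem_staircaseIdeal_succ {M : ℕ} {f : MvPolynomial (Fin 2) R}
    (hf : f ∈ staircaseIdeal p (M + 1)) :
    ∃ q, ∃ h ∈ staircaseIdeal p M, f = q * p (M + 1) + X 1 * h := by
  have hgen : {f | ∃ i ≤ M + 1, f = X 1 ^ i * p (M + 1 - i)} =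
      insert (p (M + 1)) ({X 1} * {f | ∃ i ≤ M, f = X 1 ^ i * p (M - i)}) := by
    ext f
    simp only [Set.singleton_mul, Set.mem_insert_iff, Set.mem_image, Set.mem_ofPred_eq]
    constructor
    · rintro ⟨_ | i, hi, rfl⟩
      · simp
      · exact Or.inr ⟨_, ⟨i, by omega, rfl⟩, by rw [Nat.add_sub_add_right]; ring⟩
    · rintro (rfl | ⟨_, ⟨i, hi, rfl⟩, rfl⟩)
      · exact ⟨0, by simp⟩
      · exact ⟨i + 1, by omega, by rw [Nat.add_sub_add_right]; ring⟩
  rw [staircaseIdeal, hgen, Ideal.span_insert, ← Ideal.span_mul_span'] at hf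
  obtain ⟨u, hu, v, hv, rfl⟩ := Submodule.mem_sup.mp hf
  obtain ⟨q, rfl⟩ := Ideal.mem_span_singleton'.mp hu
  obtain ⟨h, hh, rfl⟩ := Ideal.mem_span_singleton_mul.mp hv
  exact ⟨q, h, hh, rfl⟩

lemma mem_staircaseSpan_succ {M : ℕ} {f : MvPolynomial (Fin 2) R}
    (hf : f ∈ staircaseSpan R d (M + 1)) :
    ∃ u ∈ Polynomial.degreeLT R (d (M + 1)), ∃ f₁ ∈ staircaseSpan R d M,
      f = embedAlpha u + X 1 * f₁ := by
  have hgen : (stairMonomial '' staircase d (M + 1) : Set (MvPolynomial (Fin 2) R)) =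
      embedAlpha '' ((Polynomial.X ^ ·) '' Set.Iio (d (M + 1)))
        ∪ LinearMap.mulLeft R (X 1) '' (stairMonomial '' staircase d M) := by
    ext f
    simp only [staircase, stairMonomial, Set.mem_image, Set.mem_union, Set.mem_ofPred_eq,
      Set.mem_Iio, Prod.exists, LinearMap.mulLeft_apply, embedAlpha]
    constructor
    · rintro ⟨_ | i, j, ⟨hi, hj⟩, rfl⟩
      · exact Or.inl ⟨_, ⟨j, hj, rfl⟩, by simp⟩
      · exact Or.inr ⟨_, ⟨i, j, ⟨by omega, by simpa using hj⟩, rfl⟩, by ring⟩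
    · rintro (⟨_, ⟨j, hj, rfl⟩, rfl⟩ | ⟨_, ⟨i, j, ⟨hi, hj⟩, rfl⟩, rfl⟩)
      · exact ⟨0, j, ⟨by omega, hj⟩, by simp⟩
      · exact ⟨i + 1, j, ⟨by omega, by simpa using hj⟩, by ring⟩
  have hrow : Submodule.span R ((Polynomial.X ^ ·) '' Set.Iio (d (M + 1))) ≤
      Polynomial.degreeLT R (d (M + 1)) := by
    rw [Submodule.span_le]
    rintro _ ⟨j, hj, rfl⟩
    exact Polynomial.mem_degreeLT.mpr
      ((Polynomial.degree_X_pow_le j).trans_lt (by exact_mod_cast hj))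
  rw [staircaseSpan, hgen, Submodule.span_union, ← embedAlpha.coe_toLinearMap,
    ← Submodule.map_span, ← Submodule.map_span] at hf
  obtain ⟨_, ⟨u, hu, rfl⟩, _, ⟨f₁, hf₁, rfl⟩, rfl⟩ := Submodule.mem_sup.mp hf
  exact ⟨u, hrow hu, f₁, hf₁, rfl⟩

lemma staircaseSpan_sup_staircaseIdeal (hp₀ : p 0 = 1)
    (hlead : ∀ k, 0 < k → degreeOf 0 (p k - X 0 ^ d k) < d k) (M : ℕ) :
    staircaseSpan R d M ⊔ (staircaseIdeal p M).restrictScalars R = ⊤ := by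
  set T := staircaseSpan R d M ⊔ (staircaseIdeal p M).restrictScalars R
  have hmono : ∀ j i, X 0 ^ j * X 1 ^ i ∈ T := by
    intro j
    induction j using Nat.strong_induction_on with
    | _ j ih =>
    intro i
    by_cases hiM : M ≤ i
    · have hM : X 1 ^ M ∈ staircaseIdeal p M := by
        simpa [hp₀] using X_one_pow_mul_mem_staircaseIdeal (p := p) le_rfl
      refine Submodule.mem_sup_right (?_ : _ ∈ staircaseIdeal p M)
      rw [← Nat.sub_add_cancel hiM, pow_add, ← mul_assoc]
      exact Ideal.mul_mem_left _ _ hM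
    by_cases hj : j < d (M - i)
    · exact Submodule.mem_sup_left (Submodule.subset_span ⟨(i, j), ⟨by omega, hj⟩, rfl⟩)
    set k := M - i
    have hgen : X 0 ^ (j - d k) * (X 1 ^ i * p k) ∈ T :=
      Submodule.mem_sup_right
        (Ideal.mul_mem_left _ _ (X_one_pow_mul_mem_staircaseIdeal (by omega)))
    have hlow : X 0 ^ (j - d k) * X 1 ^ i * (p k - X 0 ^ d k) ∈ T := by
      refine mem_of_degreeOf_lt (T := T.comap (LinearMap.mulLeft R (X 0 ^ (j - d k) * X 1 ^ i)))
        (fun j' hj' i' => ?_) (hlead k (by omega))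
      have := ih (j - d k + j') (by omega) (i + i')
      simp only [Submodule.mem_comap, LinearMap.mulLeft_apply]
      convert this using 1
      ring
    have hsplit : X 0 ^ j * X 1 ^ i =
        X 0 ^ (j - d k) * (X 1 ^ i * p k) - X 0 ^ (j - d k) * X 1 ^ i * (p k - X 0 ^ d k) := by
      rw [← Nat.sub_add_cancel (not_lt.mp hj), pow_add, Nat.add_sub_cancel]
      ring
    rw [hsplit]
    exact T.sub_mem hgen hlow
  exact eq_top_iff.mpr fun f _ => mem_of_degreeOf_lt (fun j _ i => hmono j i) (Nat.lt_succ_self _)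

lemma staircaseSpan_inf_staircaseIdeal [IsDomain R]
    (hlead : ∀ k, 0 < k → degreeOf 0 (p k - X 0 ^ d k) < d k)
    (hstep : ∀ m, p (m + 1) ∈ staircaseIdeal p m) (M : ℕ) :
    staircaseSpan R d M ⊓ (staircaseIdeal p M).restrictScalars R = ⊥ := by
  induction M with
  | zero => simp [staircaseSpan, staircase]
  | succ M ih =>
    refine eq_bot_iff.mpr fun f hf => ?_
    obtain ⟨hfS, hfI⟩ := Submodule.mem_inf.mp hf
    obtain ⟨u, hu, f₁, hf₁, rfl⟩ := mem_staircaseSpan_succ hfS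
    obtain ⟨q, h, hh, hq⟩ := mem_staircaseIdeal_succ hfI
    have hπ : u = evalGammaZero q * evalGammaZero (p (M + 1)) := by
      simpa [evalGammaZero_embedAlpha] using congrArg evalGammaZero hq
    have hdeg := degree_evalGammaZero_eq (hlead (M + 1) M.succ_pos)
    have hu₀ : u = 0 := Polynomial.eq_zero_of_dvd_of_degree_lt (Dvd.intro_left _ hπ.symm)
      (hdeg ▸ Polynomial.mem_degreeLT.mp hu)
    have hq₀ : evalGammaZero q = 0 := by
      rw [hu₀, eq_comm, mul_eq_zero] at hπ
      exact hπ.resolve_right fun h0 => by simp [h0] at hdeg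
    obtain ⟨s, rfl⟩ := X_one_dvd_of_evalGammaZero_eq_zero hq₀
    have hf₁' : f₁ = s * p (M + 1) + h := by
      refine mul_left_cancel₀ (X_ne_zero (1 : Fin 2)) ?_
      rw [hu₀, map_zero, zero_add] at hq
      rw [hq]
      ring
    have hf₁I : f₁ ∈ staircaseIdeal p M := by
      rw [hf₁']
      exact Ideal.add_mem _ (Ideal.mul_mem_left _ _ (hstep M)) hh
    have hf₁0 : f₁ ∈ staircaseSpan R d M ⊓ (staircaseIdeal p M).restrictScalars R :=
      ⟨hf₁, hf₁I⟩
    rw [ih, Submodule.mem_bot] at hf₁0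
    simp [hu₀, hf₁0]

lemma linearIndependent_stairMonomial :
    LinearIndependent R (stairMonomial : ℕ × ℕ → MvPolynomial (Fin 2) R) := by
  have hinj : Function.Injective fun ij : ℕ × ℕ =>
      Finsupp.single (0 : Fin 2) ij.2 + Finsupp.single 1 ij.1 := by
    intro ij kl h
    have h0 := DFunLike.congr_fun h 0
    have h1 := DFunLike.congr_fun h 1
    simp only [Finsupp.coe_add, Pi.add_apply, Finsupp.single_apply] at h0 h1
    norm_num at h0 h1
    exact Prod.ext h1 h0
  have hmono : (stairMonomial : ℕ × ℕ → MvPolynomial (Fin 2) R) =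
      basisMonomials (Fin 2) R ∘ fun ij => Finsupp.single 0 ij.2 + Finsupp.single 1 ij.1 := by
    ext1 ij
    simp [stairMonomial, X_pow_eq_monomial, monomial_mul]
  rw [hmono]
  exact (basisMonomials (Fin 2) R).linearIndependent.comp _ hinj

theorem exists_basis_quotient_staircaseIdeal [IsDomain R] (hp₀ : p 0 = 1)
    (hlead : ∀ k, 0 < k → degreeOf 0 (p k - X 0 ^ d k) < d k)
    (hstep : ∀ m, p (m + 1) ∈ staircaseIdeal p m) (M : ℕ) :
    ∃ b : Module.Basis (staircase d M) R (MvPolynomial (Fin 2) R ⧸ staircaseIdeal p M),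
      ∀ ij, b ij = Ideal.Quotient.mk _ (stairMonomial ij) := by
  refine Ideal.exists_basis_quotient_of_isCompl
    (linearIndependent_stairMonomial.comp _ Subtype.val_injective) ?_
  rw [← Set.image_eq_range]
  exact ⟨disjoint_iff.mpr (staircaseSpan_inf_staircaseIdeal hlead hstep M),
    codisjoint_iff.mpr (staircaseSpan_sup_staircaseIdeal hp₀ hlead M)⟩

end Staircase

end MvPolynomial

lemma zm_two : zm 2 = X 0 ^ 2 - C 16 := by
  simp [zm, sq]

lemma exists_zm_add_three (n : ℕ) : ∃ a b : ℂ, b ≠ 0 ∧ (Even n → a = 0) ∧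
    zm (n + 3) = X 0 * zm (n + 2) - C a * zm (n + 1) + C b * (X 1 * zm n) := by
  have hb : 2 * ((n : ℂ) + 2) * ((n : ℂ) + 1) ≠ 0 := by
    exact_mod_cast (by positivity : 2 * (n + 2) * (n + 1) ≠ 0)
  rw [zm]
  split_ifs with hn
  · exact ⟨0, _, hb, fun _ => rfl, by simp [mul_assoc]⟩
  · exact ⟨_, _, hb, fun h => absurd (Nat.even_iff.mp h) hn, by ring⟩

lemma degreeOf_zm_sub_X_pow_lt (n : ℕ) (hn : 0 < n) : degreeOf 0 (zm n - X 0 ^ n) < n := by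
  induction n using Nat.strong_induction_on with
  | _ n ih =>
  obtain _ | _ | _ | n := n
  · exact absurd hn (lt_irrefl 0)
  · simp [zm]
  · simp [zm_two, degreeOf_C]
  have hle : ∀ m < n + 3, degreeOf 0 (zm m) ≤ m := by
    intro m hm
    rcases Nat.eq_zero_or_pos m with rfl | hm₀
    · simp [zm]
    · have := ih m hm hm₀
      calc degreeOf 0 (zm m) = degreeOf 0 ((zm m - X 0 ^ m) + X 0 ^ m) := by rw [sub_add_cancel]
        _ ≤ max (degreeOf 0 (zm m - X 0 ^ m)) (degreeOf 0 (X 0 ^ m : MvPolynomial (Fin 2) ℂ)) :=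
          degreeOf_add_le _ _ _
        _ ≤ m := by simp only [degreeOf_X_self_pow]; omega
  obtain ⟨a, b, -, -, hrec⟩ := exists_zm_add_three n
  have h₁ := degreeOf_mul_X_self 0 (zm (n + 2) - X 0 ^ (n + 2))
  have h₂ := ih (n + 2) (by omega) (by omega)
  have h₃ := (degreeOf_C_mul_le (zm (n + 1)) 0 a).trans (hle (n + 1) (by omega))
  have h₄ : degreeOf 0 (C b * (X 1 * zm n)) ≤ n := by
    refine (degreeOf_C_mul_le _ 0 b).trans ?_
    rw [mul_comm, degreeOf_mul_X_of_ne _ (by decide)]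
    exact hle n (by omega)
  have hsplit : zm (n + 3) - X 0 ^ (n + 3) =
      (zm (n + 2) - X 0 ^ (n + 2)) * X 0 - C a * zm (n + 1) + C b * (X 1 * zm n) := by
    rw [hrec]; ring
  rw [hsplit]
  refine (degreeOf_add_le _ _ _).trans_lt (max_lt ?_ (by omega))
  exact (degreeOf_sub_le _ _ _).trans_lt (max_lt (by omega) (by omega))

lemma X_one_pow_mul_zm_mem_Jm {g : ℕ} (hg : Even g) (i : ℕ) :
    ∀ n, g ≤ n + 2 * i → X 1 ^ i * zm n ∈ Jm g := by
  induction i with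
  | zero =>
    intro n hn
    rw [pow_zero, one_mul]
    induction n using Nat.strong_induction_on with
    | _ n ih =>
    by_cases hsmall : n < g + 3
    · obtain rfl | rfl | rfl : n = g ∨ n = g + 1 ∨ n = g + 2 := by omega
      all_goals exact Ideal.subset_span (by simp)
    obtain ⟨m, rfl⟩ : ∃ m, n = m + 3 := ⟨n - 3, by omega⟩
    obtain ⟨a, b, -, -, hrec⟩ := exists_zm_add_three m
    rw [hrec]
    refine add_mem (sub_mem ?_ ?_) ?_ <;> refine Ideal.mul_mem_left _ _ ?_
    · exact ih _ (by omega) (by omega)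
    · exact ih _ (by omega) (by omega)
    · exact Ideal.mul_mem_left _ _ (ih _ (by omega) (by omega))
  | succ i ih =>
    intro n hn
    obtain ⟨a, b, hb, ha, hrec⟩ := exists_zm_add_three n
    have hCb : C b⁻¹ * C b = (1 : MvPolynomial (Fin 2) ℂ) := by
      rw [← C_mul, inv_mul_cancel₀ hb, C_1]
    have key : X 1 ^ (i + 1) * zm n = C b⁻¹ * (X 1 ^ i * zm (n + 3)
        - X 0 * (X 1 ^ i * zm (n + 2)) + C a * (X 1 ^ i * zm (n + 1))) := by
      rw [hrec]
      linear_combination (-(X 1 ^ (i + 1) * zm n)) * hCb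
    have h₃ : C a * (X 1 ^ i * zm (n + 1)) ∈ Jm g := by
      by_cases hn' : Even n
      · simp [ha hn']
      · refine Ideal.mul_mem_left _ _ (ih _ ?_)
        obtain ⟨t, rfl⟩ := hg
        obtain ⟨s, rfl⟩ := Nat.not_even_iff_odd.mp hn'
        omega
    rw [key]
    exact Ideal.mul_mem_left _ _ (add_mem (sub_mem (ih _ (by omega))
      (Ideal.mul_mem_left _ _ (ih _ (by omega)))) h₃)

lemma X_one_pow_mul_zm_mem_staircaseIdeal (M n : ℕ) :
    ∀ i, 2 * M ≤ n + 2 * i → X 1 ^ i * zm n ∈ staircaseIdeal (fun k => zm (2 * k)) M := by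
  induction n using Nat.strong_induction_on with
  | _ n ih =>
  intro i hi
  by_cases hiM : M ≤ i
  · have hM : X 1 ^ M * zm (2 * (M - M)) ∈ staircaseIdeal (fun k => zm (2 * k)) M :=
      X_one_pow_mul_mem_staircaseIdeal le_rfl
    rw [Nat.sub_self, mul_zero, zm, mul_one] at hM
    rw [← Nat.sub_add_cancel hiM, pow_add, mul_right_comm]
    exact Ideal.mul_mem_left _ _ hM
  by_cases hgen : n + 2 * i = 2 * M
  · rw [show n = 2 * (M - i) by omega]
    exact X_one_pow_mul_mem_staircaseIdeal (by omega)
  obtain ⟨m, rfl⟩ : ∃ m, n = m + 3 := ⟨n - 3, by omega⟩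
  obtain ⟨a, b, -, ha, hrec⟩ := exists_zm_add_three m
  have h₃ : C a * (X 1 ^ i * zm (m + 1)) ∈ staircaseIdeal (fun k => zm (2 * k)) M := by
    by_cases hm : Even m
    · simp [ha hm]
    · refine Ideal.mul_mem_left _ _ (ih _ (by omega) _ ?_)
      obtain ⟨s, rfl⟩ := Nat.not_even_iff_odd.mp hm
      omega
  have hsplit : X 1 ^ i * zm (m + 3) = X 0 * (X 1 ^ i * zm (m + 2))
      - C a * (X 1 ^ i * zm (m + 1)) + C b * (X 1 ^ (i + 1) * zm m) := by
    rw [hrec]; ring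
  rw [hsplit]
  exact add_mem (sub_mem (Ideal.mul_mem_left _ _ (ih _ (by omega) _ (by omega))) h₃)
    (Ideal.mul_mem_left _ _ (ih _ (by omega) _ (by omega)))

lemma Jm_two_mul (M : ℕ) : Jm (2 * M) = staircaseIdeal (fun k => zm (2 * k)) M := by
  refine le_antisymm (Ideal.span_le.mpr ?_) (Ideal.span_le.mpr ?_)
  · rintro _ (rfl | rfl | rfl) <;>
      simpa using X_one_pow_mul_zm_mem_staircaseIdeal M _ 0 (by omega)
  · rintro _ ⟨i, hi, rfl⟩
    exact X_one_pow_mul_zm_mem_Jm (even_two_mul M) i _ (by omega)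

/-- For g ≥ 2 even, J_g^- is generated by {ζ_g^-, γ ζ_{g−2}^-, …, γ^{g/2−1} ζ_2^-, γ^{g/2}},
    and the monomials α^j γ^i with 0 ≤ i ≤ g/2−1, 0 ≤ j ≤ g−2i−1 give a basis of
    ℂ[α,γ]/J_g^-. -/
theorem Jm_groebner_basis (g : ℕ) (hg : 2 ≤ g) (heven : Even g) :
    Jm g = Ideal.span
      ({p | ∃ i : ℕ, i ≤ g / 2 - 1 ∧ p = (X 1 : MvPolynomial (Fin 2) ℂ) ^ i * zm (g - 2 * i)}
        ∪ {(X 1 : MvPolynomial (Fin 2) ℂ) ^ (g / 2)}) ∧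
    ∃ b : Module.Basis {p : ℕ × ℕ // p.1 ≤ g / 2 - 1 ∧ p.2 ≤ g - 2 * p.1 - 1} ℂ
        (MvPolynomial (Fin 2) ℂ ⧸ Jm g),
      ∀ p, b p = Ideal.Quotient.mk (Jm g)
        ((X 0 : MvPolynomial (Fin 2) ℂ) ^ (p : ℕ × ℕ).2
          * (X 1 : MvPolynomial (Fin 2) ℂ) ^ (p : ℕ × ℕ).1) := by
  obtain ⟨M, rfl⟩ := heven.two_dvd
  rw [Jm_two_mul, Nat.mul_div_cancel_left M two_pos]
  refine ⟨congrArg Ideal.span ?_, ?_⟩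
  · ext f
    simp only [Set.mem_union, Set.mem_ofPred_eq, Set.mem_singleton_iff]
    constructor
    · rintro ⟨i, hi, rfl⟩
      rcases hi.lt_or_eq with hi | rfl
      · exact Or.inl ⟨i, by omega, by rw [Nat.mul_sub]⟩
      · exact Or.inr (by simp [zm])
    · rintro (⟨i, hi, rfl⟩ | rfl)
      · exact ⟨i, by omega, by rw [Nat.mul_sub]⟩
      · exact ⟨M, le_rfl, by simp [zm]⟩
  · obtain ⟨b, hb⟩ := exists_basis_quotient_staircaseIdeal (d := (2 * ·)) (by simp [zm])
      (fun k hk => degreeOf_zm_sub_X_pow_lt _ (by omega))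
      (fun m => by simpa using X_one_pow_mul_zm_mem_staircaseIdeal m (2 * (m + 1)) 0 (by omega)) M
    refine ⟨b.reindex (Equiv.subtypeEquivRight fun ij => ?_), fun ij => ?_⟩
    · simp only [staircase, Set.mem_ofPred_eq]
      omega
    · simp [hb, stairMonomial]
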